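/- Let H be a real Hilbert space and x, t ∈ H with x ≠ 0 and ‖x − t‖ ≥ (1/2)‖x‖. Then ‖s(x−t)⊗s(x−t) − s(x)⊗s(x)‖_F ≤ 4‖t‖/‖x‖, where s(u) = u/‖u‖. -/

import Mathlib

open scoped RealInnerProductSpace

/-- The rank-one operator `u ⊗ v : w ↦ ⟨v, w⟩ u`. -/
noncomputable def rankOne {H : Type*} [NormedAddCommGroup H] [InnerProductSpace ℝ H]
    (u v : H) : H →L[ℝ] H := (innerSL ℝ v).smulRight u

/-- The spatial sign `s(u) = u / ‖u‖` (with `s(0) = 0`). -/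
noncomputable def sgn {H : Type*} [NormedAddCommGroup H] [InnerProductSpace ℝ H]
    (u : H) : H := ‖u‖⁻¹ • u

/-- Squared Hilbert–Schmidt norm relative to a Hilbert basis `b`. -/
noncomputable def hsNormSq {H ι : Type*} [NormedAddCommGroup H] [InnerProductSpace ℝ H]
    (b : HilbertBasis ι ℝ H) (A : H →L[ℝ] H) : ℝ := ∑' i, ‖A (b i)‖ ^ 2

/-- Hilbert–Schmidt norm relative to a Hilbert basis `b`. -/
noncomputable def hsNorm {H ι : Type*} [NormedAddCommGroup H] [InnerProductSpace ℝ H]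
    (b : HilbertBasis ι ℝ H) (A : H →L[ℝ] H) : ℝ := Real.sqrt (hsNormSq b A)

/-- Hilbert–Schmidt inner product relative to a Hilbert basis `b`. -/
noncomputable def hsInner {H ι : Type*} [NormedAddCommGroup H] [InnerProductSpace ℝ H]
    (b : HilbertBasis ι ℝ H) (A B : H →L[ℝ] H) : ℝ := ∑' i, ⟪A (b i), B (b i)⟫

/-!
For unit vectors `a`, `c` the squared Hilbert–Schmidt norm of `a ⊗ a - c ⊗ c` is
`2 - 2 ⟪a, c⟫² = (1 + ⟪a, c⟫) ‖a - c‖² ≤ 2 ‖a - c‖²`, independently of the basis. Normalisation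
is Lipschitz away from the origin, `‖s u - s v‖ ≤ 2 ‖u - v‖ / ‖u‖`, and taking `u = x`,
`v = x - t` gives the bound `√2 · 2 ‖t‖ / ‖x‖ ≤ 4 ‖t‖ / ‖x‖`.
-/

section

variable {H : Type*} [NormedAddCommGroup H] [InnerProductSpace ℝ H]

lemma norm_sgn {u : H} (hu : u ≠ 0) : ‖sgn u‖ = 1 :=
  NormedSpace.norm_normalize_eq_one_iff.2 hu

lemma norm_sgn_sub_sgn_le {u : H} (hu : u ≠ 0) (v : H) :
    ‖sgn u - sgn v‖ ≤ 2 * ‖u - v‖ / ‖u‖ := by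
  have hu' : 0 < ‖u‖ := norm_pos_iff.2 hu
  rcases eq_or_ne v 0 with rfl | hv
  · have hsgn0 : sgn (0 : H) = 0 := smul_zero _
    rw [hsgn0, sub_zero, sub_zero, norm_sgn hu, mul_div_assoc, div_self hu'.ne']
    norm_num
  have hv' : 0 < ‖v‖ := norm_pos_iff.2 hv
  have hfirst : ‖sgn u - ‖u‖⁻¹ • v‖ = ‖u - v‖ / ‖u‖ := by
    rw [sgn, ← smul_sub, norm_smul, norm_inv, norm_norm, inv_mul_eq_div]
  have hsecond : ‖‖u‖⁻¹ • v - sgn v‖ = |‖v‖ - ‖u‖| / ‖u‖ := by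
    rw [sgn, ← sub_smul, norm_smul, Real.norm_eq_abs,
      show ‖u‖⁻¹ - ‖v‖⁻¹ = (‖v‖ - ‖u‖) / ‖u‖ / ‖v‖ by field_simp, abs_div, abs_div,
      abs_norm, abs_norm, div_mul_cancel₀ _ hv'.ne']
  calc ‖sgn u - sgn v‖ ≤ ‖sgn u - ‖u‖⁻¹ • v‖ + ‖‖u‖⁻¹ • v - sgn v‖ :=
        norm_sub_le_norm_sub_add_norm_sub _ _ _
    _ = ‖u - v‖ / ‖u‖ + |‖v‖ - ‖u‖| / ‖u‖ := by rw [hfirst, hsecond]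
    _ ≤ 2 * ‖u - v‖ / ‖u‖ := by
      rw [← add_div, two_mul]
      gcongr
      rw [abs_sub_comm]
      exact abs_norm_sub_norm_le u v

lemma rankOne_apply (u v w : H) : rankOne u v w = ⟪v, w⟫ • u := rfl

variable {ι : Type*} (b : HilbertBasis ι ℝ H)

lemma hsNormSq_rankOne_sub_rankOne (a c : H) :
    hsNormSq b (rankOne a a - rankOne c c) = ‖a‖ ^ 4 + ‖c‖ ^ 4 - 2 * ⟪a, c⟫ ^ 2 := by
  have hsum := ((b.hasSum_inner_mul_inner a a).mul_left (‖a‖ ^ 2)).add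
    ((b.hasSum_inner_mul_inner c c).mul_left (‖c‖ ^ 2)) |>.sub
    ((b.hasSum_inner_mul_inner a c).mul_left (2 * ⟪a, c⟫))
  have hterm (e : H) : ‖(rankOne a a - rankOne c c) e‖ ^ 2 =
      ‖a‖ ^ 2 * (⟪a, e⟫ * ⟪e, a⟫) + ‖c‖ ^ 2 * (⟪c, e⟫ * ⟪e, c⟫)
        - 2 * ⟪a, c⟫ * (⟪a, e⟫ * ⟪e, c⟫) := by
    rw [sub_apply, rankOne_apply, rankOne_apply, norm_sub_sq_real,
      norm_smul, norm_smul, real_inner_smul_left, real_inner_smul_right,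
      real_inner_comm e a, real_inner_comm e c, Real.norm_eq_abs, Real.norm_eq_abs]
    ring_nf
    simp only [sq_abs]
    ring
  rw [hsNormSq]
  simp only [hterm]
  rw [hsum.tsum_eq, real_inner_self_eq_norm_sq, real_inner_self_eq_norm_sq]
  ring

lemma hsNorm_rankOne_sub_rankOne_le {a c : H} (ha : ‖a‖ = 1) (hc : ‖c‖ = 1) :
    hsNorm b (rankOne a a - rankOne c c) ≤ √2 * ‖a - c‖ := by
  have hac : ⟪a, c⟫ ≤ 1 := (real_inner_le_norm a c).trans_eq (by rw [ha, hc, one_mul])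
  have hdist : ‖a - c‖ ^ 2 = 2 - 2 * ⟪a, c⟫ := by
    rw [norm_sub_sq_real, ha, hc]; ring
  rw [hsNorm, hsNormSq_rankOne_sub_rankOne, ha, hc, ← Real.sqrt_sq (norm_nonneg (a - c)),
    ← Real.sqrt_mul zero_le_two]
  gcongr
  calc (1 : ℝ) ^ 4 + 1 ^ 4 - 2 * ⟪a, c⟫ ^ 2 = (1 + ⟪a, c⟫) * ‖a - c‖ ^ 2 := by
        rw [hdist]; ring
    _ ≤ 2 * ‖a - c‖ ^ 2 := by gcongr; linarith

end

theorem stmt2 {H ι : Type*} [NormedAddCommGroup H] [InnerProductSpace ℝ H]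
    (b : HilbertBasis ι ℝ H) (x t : H) (hx : x ≠ 0) (hxt : ‖x - t‖ ≥ ‖x‖ / 2) :
    hsNorm b (rankOne (sgn (x - t)) (sgn (x - t)) - rankOne (sgn x) (sgn x))
      ≤ 4 * ‖t‖ / ‖x‖ := by
  have hxt0 : x - t ≠ 0 := norm_pos_iff.1 (lt_of_lt_of_le (by positivity) hxt)
  have hsgn : ‖sgn x - sgn (x - t)‖ ≤ 2 * ‖t‖ / ‖x‖ := by
    simpa only [sub_sub_cancel] using norm_sgn_sub_sgn_le hx (x - t)
  have hsqrt : √2 ≤ 2 := by nlinarith [Real.sqrt_two_lt_three_halves]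
  calc _ ≤ √2 * ‖sgn (x - t) - sgn x‖ :=
        hsNorm_rankOne_sub_rankOne_le b (norm_sgn hxt0) (norm_sgn hx)
    _ ≤ 2 * (2 * ‖t‖ / ‖x‖) := by
        rw [norm_sub_rev]; gcongr
    _ = 4 * ‖t‖ / ‖x‖ := by ring
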